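/- For integers s and odd i, the centralizer in G of a^s u^i equals ⟨a^2, u⟩ if s is even and ⟨a^2, au⟩ if s is odd; in either case it is an abelian normal subgroup of G of index 4. -/

import Mathlib

namespace ZkDl

def n₁ (l : ℕ) : ℕ := 2 ^ (l - 1) + 1
def n₂ (l : ℕ) : ℕ := 2 ^ (l - 1) - 1

/-- The relations of the presentation
`⟨a, u, v | a^(2^l) = u^k = v^2 = 1, u a u⁻¹ = a^(n₁), v a v = a^(n₂), v u v = u⁻¹⟩`,
with generators `a = 0`, `u = 1`, `v = 2` in `Fin 3`. -/
def rels (l k : ℕ) : Set (FreeGroup (Fin 3)) :=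
  { FreeGroup.of 0 ^ 2 ^ l,
    FreeGroup.of 1 ^ k,
    FreeGroup.of 2 ^ 2,
    FreeGroup.of 1 * FreeGroup.of 0 * (FreeGroup.of 1)⁻¹ * (FreeGroup.of 0 ^ n₁ l)⁻¹,
    FreeGroup.of 2 * FreeGroup.of 0 * FreeGroup.of 2 * (FreeGroup.of 0 ^ n₂ l)⁻¹,
    FreeGroup.of 2 * FreeGroup.of 1 * FreeGroup.of 2 * FreeGroup.of 1 }

/-- The group `Z_{2^l} ⋊ D_k` given by the presentation above. -/
abbrev G (l k : ℕ) : Type := PresentedGroup (rels l k)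

def a (l k : ℕ) : G l k := PresentedGroup.of 0
def u (l k : ℕ) : G l k := PresentedGroup.of 1
def v (l k : ℕ) : G l k := PresentedGroup.of 2
end ZkDl

/-!
Every element of `G` is `a^x u^y` or `a^x u^y v`. Writing `h = 2^(l-1)`, conjugation by `u^y`
acts on `⟨a⟩ ≅ ℤ/2^l` as multiplication by `1 + y h` (because `2^l ∣ h²`), so `a^x u^y` and
`a^x' u^y'` commute iff `x y' - x' y` is even. No `a^x u^y v` commutes with `a^s u^i`: modulo
`⟨a⟩`, i.e. in the dihedral group `D_k`, this would force `u^(2i) = 1`, impossible for odd `i`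
when `4 ∣ k`. Hence the centralizer of `a^s u^i` is `{a^x u^y | x + s y even}`, which is the kernel
of the surjective character `G → {±1}²` sending `a ↦ (-1, 1)`, `u ↦ ((-1)^s, 1)`, `v ↦ (1, -1)`.
This kernel is abelian by the commutation criterion, normal, of index 4, and generated by
`a², u` or by `a², a u` according to the parity of `s`.
-/

lemma zpow_mem_of_sq_mem {M : Type*} [Group M] {S : Subgroup M} {g : M} (h : g ^ 2 ∈ S)
    {x : ℤ} (hx : Even x) : g ^ x ∈ S := by
  obtain ⟨c, rfl⟩ := hx
  simpa [← two_mul, zpow_mul] using zpow_mem h c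

lemma Int.units_neg_one_zpow_eq_one_iff {n : ℤ} : (-1 : ℤˣ) ^ n = 1 ↔ Even n := by
  rcases Int.even_or_odd n with hn | hn
  · simp [hn.neg_one_zpow, hn]
  · simp [hn.neg_one_zpow, Int.not_even_iff_odd.2 hn]

namespace ZkDl

variable {l k : ℕ}

section Exponents

lemma n₁_cast : (n₁ l : ℤ) = 2 ^ (l - 1) + 1 := by
  simp [n₁]

lemma n₂_cast : (n₂ l : ℤ) = 2 ^ (l - 1) - 1 := by
  simp [n₂, Nat.one_le_two_pow]

lemma odd_n₁ (hl : 2 ≤ l) : Odd (n₁ l) :=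
  (Nat.even_pow.2 ⟨even_two, by omega⟩).add_one

lemma odd_n₂ (hl : 2 ≤ l) : Odd (n₂ l) :=
  Nat.Even.sub_odd Nat.one_le_two_pow (Nat.even_pow.2 ⟨even_two, by omega⟩) odd_one

lemma modEq_two_pow_of_sub_eq (hl : 2 ≤ l) {x y : ℤ} (c d : ℤ)
    (h : y - x = c * (2 * 2 ^ (l - 1)) + d * (2 ^ (l - 1)) ^ 2) : x ≡ y [ZMOD 2 ^ l] := by
  have two_mul_eq : (2 : ℤ) * 2 ^ (l - 1) = 2 ^ l := by rw [← pow_succ']; congr 1; omega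
  have dvd_sq : (2 : ℤ) ^ l ∣ (2 ^ (l - 1)) ^ 2 := by
    rw [← pow_mul]; exact pow_dvd_pow 2 (by omega)
  refine Int.modEq_of_dvd ?_
  rw [h, two_mul_eq]
  exact (dvd_mul_left _ c).add (dvd_sq.mul_left d)

lemma cast_n₁_mul_self (hl : 2 ≤ l) : (n₁ l : ZMod (2 ^ l)) * n₁ l = 1 := by
  have := (ZMod.intCast_eq_intCast_iff _ _ _).2
    (modEq_two_pow_of_sub_eq hl (x := 1) (y := n₁ l * n₁ l) 1 1 (by rw [n₁_cast]; ring))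
  exact_mod_cast this.symm

lemma cast_n₂_mul_self (hl : 2 ≤ l) : (n₂ l : ZMod (2 ^ l)) * n₂ l = 1 := by
  have := (ZMod.intCast_eq_intCast_iff _ _ _).2
    (modEq_two_pow_of_sub_eq hl (x := 1) (y := n₂ l * n₂ l) (-1) 1 (by rw [n₂_cast]; ring))
  exact_mod_cast this.symm

end Exponents

section Relations

lemma a_pow_two_pow : a l k ^ 2 ^ l = 1 := by
  have := PresentedGroup.one_of_mem (rels := rels l k) (x := FreeGroup.of 0 ^ 2 ^ l)
    (by simp [rels])
  rwa [map_pow] at this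

lemma v_mul_self : v l k * v l k = 1 := by
  have := PresentedGroup.one_of_mem (rels := rels l k) (x := FreeGroup.of 2 ^ 2) (by simp [rels])
  rwa [map_pow, sq] at this

lemma u_mul_a_mul_u_inv : u l k * a l k * (u l k)⁻¹ = a l k ^ n₁ l := by
  have := PresentedGroup.one_of_mem (rels := rels l k)
    (x := FreeGroup.of 1 * FreeGroup.of 0 * (FreeGroup.of 1)⁻¹ * (FreeGroup.of 0 ^ n₁ l)⁻¹)
    (by simp [rels])
  rwa [map_mul, map_inv, map_pow, mul_inv_eq_one] at this

lemma v_mul_a_mul_v : v l k * a l k * v l k = a l k ^ n₂ l := by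
  have := PresentedGroup.one_of_mem (rels := rels l k)
    (x := FreeGroup.of 2 * FreeGroup.of 0 * FreeGroup.of 2 * (FreeGroup.of 0 ^ n₂ l)⁻¹)
    (by simp [rels])
  rwa [map_mul, map_inv, map_pow, mul_inv_eq_one] at this

lemma v_mul_u_mul_v : v l k * u l k * v l k = (u l k)⁻¹ := by
  have := PresentedGroup.one_of_mem (rels := rels l k)
    (x := FreeGroup.of 2 * FreeGroup.of 1 * FreeGroup.of 2 * FreeGroup.of 1) (by simp [rels])
  rwa [map_mul, mul_eq_one_iff_eq_inv] at this

lemma v_inv : (v l k)⁻¹ = v l k :=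
  inv_eq_of_mul_eq_one_right v_mul_self

def G.lift {H : Type*} [Group H] (α β γ : H) (h₁ : α ^ 2 ^ l = 1) (h₂ : β ^ k = 1)
    (h₃ : γ ^ 2 = 1) (h₄ : β * α * β⁻¹ = α ^ n₁ l) (h₅ : γ * α * γ = α ^ n₂ l)
    (h₆ : γ * β * γ = β⁻¹) : G l k →* H :=
  PresentedGroup.toGroup (f := ![α, β, γ]) <| by
    rintro r (rfl | rfl | rfl | rfl | rfl | rfl) <;> simp [h₁, h₂, h₃, h₄, h₅, h₆]

section Lift

variable {H : Type*} [Group H] {α β γ : H} {h₁ : α ^ 2 ^ l = 1} {h₂ : β ^ k = 1}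
  {h₃ : γ ^ 2 = 1} {h₄ : β * α * β⁻¹ = α ^ n₁ l} {h₅ : γ * α * γ = α ^ n₂ l}
  {h₆ : γ * β * γ = β⁻¹}

@[simp] lemma G.lift_a : G.lift α β γ h₁ h₂ h₃ h₄ h₅ h₆ (a l k) = α :=
  PresentedGroup.toGroup.of _

@[simp] lemma G.lift_u : G.lift α β γ h₁ h₂ h₃ h₄ h₅ h₆ (u l k) = β :=
  PresentedGroup.toGroup.of _

@[simp] lemma G.lift_v : G.lift α β γ h₁ h₂ h₃ h₄ h₅ h₆ (v l k) = γ :=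
  PresentedGroup.toGroup.of _

end Lift

end Relations

section NormalForm

lemma a_zpow_eq_of_modEq {m n : ℤ} (h : m ≡ n [ZMOD 2 ^ l]) : a l k ^ m = a l k ^ n :=
  zpow_eq_zpow_iff_modEq.2 <| h.of_dvd <| by
    exact_mod_cast orderOf_dvd_of_pow_eq_one a_pow_two_pow

lemma u_zpow_conj_a_zpow (hl : 2 ≤ l) (y m : ℤ) :
    u l k ^ y * a l k ^ m * (u l k ^ y)⁻¹ = a l k ^ (m * (1 + y * 2 ^ (l - 1))) := by
  have conj_u (t : ℤ) : u l k * a l k ^ t * (u l k)⁻¹ = a l k ^ (t * n₁ l) := by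
    rw [← conj_zpow, u_mul_a_mul_u_inv, ← zpow_natCast, ← zpow_mul, mul_comm]
  have conj_u_inv (t : ℤ) : (u l k)⁻¹ * a l k ^ t * u l k = a l k ^ (t * n₁ l) :=
    calc (u l k)⁻¹ * a l k ^ t * u l k
        = (u l k)⁻¹ * a l k ^ (t * n₁ l * n₁ l) * u l k := by
          rw [a_zpow_eq_of_modEq (n := t * n₁ l * n₁ l)
            (modEq_two_pow_of_sub_eq hl t t (by rw [n₁_cast]; ring))]
      _ = (u l k)⁻¹ * (u l k * a l k ^ (t * n₁ l) * (u l k)⁻¹) * u l k := by rw [conj_u]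
      _ = a l k ^ (t * n₁ l) := by group
  induction y using Int.induction_on with
  | zero => simp
  | succ y ih =>
    calc u l k ^ ((y : ℤ) + 1) * a l k ^ m * (u l k ^ ((y : ℤ) + 1))⁻¹
        = u l k * (u l k ^ (y : ℤ) * a l k ^ m * (u l k ^ (y : ℤ))⁻¹) * (u l k)⁻¹ := by
          group
      _ = a l k ^ (m * (1 + y * 2 ^ (l - 1)) * n₁ l) := by rw [ih, conj_u]
      _ = a l k ^ (m * (1 + (y + 1) * 2 ^ (l - 1))) :=
          a_zpow_eq_of_modEq (modEq_two_pow_of_sub_eq hl 0 (-m * y) (by rw [n₁_cast]; ring))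
  | pred y ih =>
    calc u l k ^ (-(y : ℤ) - 1) * a l k ^ m * (u l k ^ (-(y : ℤ) - 1))⁻¹
        = (u l k)⁻¹ * (u l k ^ (-(y : ℤ)) * a l k ^ m * (u l k ^ (-(y : ℤ)))⁻¹) * u l k := by
          group
      _ = a l k ^ (m * (1 + -y * 2 ^ (l - 1)) * n₁ l) := by rw [ih, conj_u_inv]
      _ = a l k ^ (m * (1 + (-y - 1) * 2 ^ (l - 1))) :=
          a_zpow_eq_of_modEq (modEq_two_pow_of_sub_eq hl (-m) (m * y) (by rw [n₁_cast]; ring))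

lemma u_zpow_mul_a_zpow (hl : 2 ≤ l) (y m : ℤ) :
    u l k ^ y * a l k ^ m = a l k ^ (m * (1 + y * 2 ^ (l - 1))) * u l k ^ y := by
  rw [← u_zpow_conj_a_zpow hl, inv_mul_cancel_right]

lemma v_mul_a_zpow (m : ℤ) : v l k * a l k ^ m = a l k ^ (m * n₂ l) * v l k := by
  rw [← mul_inv_eq_iff_eq_mul, ← conj_zpow, v_inv, v_mul_a_mul_v, ← zpow_natCast, ← zpow_mul,
    mul_comm]

lemma v_mul_u_zpow (y : ℤ) : v l k * u l k ^ y = u l k ^ (-y) * v l k := by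
  rw [← mul_inv_eq_iff_eq_mul, ← conj_zpow, v_inv, v_mul_u_mul_v, zpow_neg, inv_zpow]

lemma exists_normal_form (hl : 2 ≤ l) (g : G l k) :
    ∃ x y : ℤ, g = a l k ^ x * u l k ^ y ∨ g = a l k ^ x * u l k ^ y * v l k := by
  set S := {g : G l k | ∃ x y : ℤ, g = a l k ^ x * u l k ^ y ∨ g = a l k ^ x * u l k ^ y * v l k}
  have a_mul (t : ℤ) : ∀ g ∈ S, a l k ^ t * g ∈ S := by
    rintro _ ⟨x, y, rfl | rfl⟩
    exacts [⟨t + x, y, .inl (by group)⟩, ⟨t + x, y, .inr (by group)⟩]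
  have u_mul (t : ℤ) : ∀ g ∈ S, u l k ^ t * g ∈ S := by
    rintro _ ⟨x, y, rfl | rfl⟩
    · refine ⟨x * (1 + t * 2 ^ (l - 1)), t + y, .inl ?_⟩
      rw [← mul_assoc, u_zpow_mul_a_zpow hl, mul_assoc, zpow_add (u l k)]
    · refine ⟨x * (1 + t * 2 ^ (l - 1)), t + y, .inr ?_⟩
      rw [← mul_assoc, ← mul_assoc, u_zpow_mul_a_zpow hl, mul_assoc _ (u l k ^ t),
        zpow_add (u l k)]
  have v_mul : ∀ g ∈ S, v l k * g ∈ S := by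
    rintro _ ⟨x, y, rfl | rfl⟩
    · refine ⟨x * n₂ l, -y, .inr ?_⟩
      rw [← mul_assoc, v_mul_a_zpow, mul_assoc, v_mul_u_zpow, ← mul_assoc]
    · refine ⟨x * n₂ l, -y, .inl ?_⟩
      rw [← mul_assoc, ← mul_assoc, v_mul_a_zpow, mul_assoc _ (v l k), v_mul_u_zpow,
        ← mul_assoc, mul_assoc _ (v l k), v_mul_self, mul_one]
  have hg : g ∈ Subgroup.closure (Set.range (PresentedGroup.of : Fin 3 → G l k)) := by
    rw [PresentedGroup.closure_range_of]; trivial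
  induction hg using Subgroup.closure_induction_left with
  | one => exact ⟨0, 0, .inl (by simp)⟩
  | mul_left _ hj g _ ih =>
    obtain ⟨j, rfl⟩ := hj
    fin_cases j
    · exact (by simpa using a_mul 1 g ih : a l k * g ∈ S)
    · exact (by simpa using u_mul 1 g ih : u l k * g ∈ S)
    · exact v_mul g ih
  | inv_mul_cancel _ hj g _ ih =>
    obtain ⟨j, rfl⟩ := hj
    fin_cases j
    · exact (by simpa using a_mul (-1) g ih : (a l k)⁻¹ * g ∈ S)
    · exact (by simpa using u_mul (-1) g ih : (u l k)⁻¹ * g ∈ S)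
    · exact (by simpa [v_inv] using v_mul g ih : (v l k)⁻¹ * g ∈ S)

lemma a_zpow_mul_u_zpow_mul (hl : 2 ≤ l) (x y x' y' : ℤ) :
    a l k ^ x * u l k ^ y * (a l k ^ x' * u l k ^ y') =
      a l k ^ (x + x' * (1 + y * 2 ^ (l - 1))) * u l k ^ (y + y') := by
  rw [mul_assoc, ← mul_assoc (u l k ^ y), u_zpow_mul_a_zpow hl, zpow_add, zpow_add]
  group

end NormalForm

section Representations

def affineRep (hl : 2 ≤ l) (hk : 2 ∣ k) : G l k →* Equiv.Perm (ZMod (2 ^ l)) :=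
  let c₁ : (ZMod (2 ^ l))ˣ := .mkOfMulEqOne _ _ (cast_n₁_mul_self hl)
  let c₂ : (ZMod (2 ^ l))ˣ := .mkOfMulEqOne _ _ (cast_n₂_mul_self hl)
  have hc₁ : c₁ * c₁ = 1 := Units.ext (cast_n₁_mul_self hl)
  have hc₂ : c₂ * c₂ = 1 := Units.ext (cast_n₂_mul_self hl)
  G.lift (l := l) (k := k) (Equiv.addLeft 1) (MulAction.toPermHom _ _ c₁)
    (MulAction.toPermHom _ _ c₂)
    (by simp)
    (by obtain ⟨k', rfl⟩ := hk; rw [← map_pow, pow_mul, sq, hc₁, one_pow, map_one])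
    (by rw [← map_pow, sq, hc₂, map_one])
    (by
      rw [← map_inv, inv_eq_of_mul_eq_one_right hc₁]
      ext x
      simp [c₁, Units.smul_def]
      linear_combination x * cast_n₁_mul_self hl)
    (by
      ext x
      simp [c₂, Units.smul_def]
      linear_combination x * cast_n₂_mul_self hl)
    (by rw [← map_inv, ← map_mul, ← map_mul, mul_comm c₂, mul_assoc, hc₂, mul_one,
      inv_eq_of_mul_eq_one_right hc₁])

lemma orderOf_a (hl : 2 ≤ l) (hk : 2 ∣ k) : orderOf (a l k) = 2 ^ l := by
  refine Nat.dvd_antisymm (orderOf_dvd_of_pow_eq_one a_pow_two_pow) ?_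
  have h := congrArg (fun σ => σ 0) (congrArg (affineRep hl hk) (pow_orderOf_eq_one (a l k)))
  simp only [map_pow, affineRep, G.lift_a, map_one] at h
  simpa [ZMod.natCast_eq_zero_iff] using h

lemma a_zpow_eq_a_zpow_iff (hl : 2 ≤ l) (hk : 2 ∣ k) {m n : ℤ} :
    a l k ^ m = a l k ^ n ↔ m ≡ n [ZMOD 2 ^ l] := by
  rw [zpow_eq_zpow_iff_modEq, orderOf_a hl hk, Nat.cast_pow, Nat.cast_ofNat]

open DihedralGroup in
def dihedralRep : G l k →* DihedralGroup k :=
  G.lift (l := l) 1 (r 1) (sr 0) (one_pow _) (by simp) (by simp [sq])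
    (by simp) (by simp) (by rw [sr_mul_r, sr_mul_sr, inv_r]; simp)

@[simp] lemma dihedralRep_a : dihedralRep (a l k) = 1 := G.lift_a
@[simp] lemma dihedralRep_u : dihedralRep (u l k) = DihedralGroup.r 1 := G.lift_u
@[simp] lemma dihedralRep_v : dihedralRep (v l k) = DihedralGroup.sr 0 := G.lift_v

end Representations

section Commutation

lemma commute_a_zpow_mul_u_zpow_iff (hl : 2 ≤ l) (hk : 2 ∣ k) {x y x' y' : ℤ} :
    Commute (a l k ^ x * u l k ^ y) (a l k ^ x' * u l k ^ y') ↔ Even (x * y' - x' * y) := by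
  have h_ne : (2 : ℤ) ^ (l - 1) ≠ 0 := by positivity
  rw [Commute, SemiconjBy, a_zpow_mul_u_zpow_mul hl, a_zpow_mul_u_zpow_mul hl, add_comm y',
    mul_left_inj, a_zpow_eq_a_zpow_iff hl hk, Int.modEq_iff_dvd, even_iff_two_dvd,
    show (2 : ℤ) ^ l = 2 * 2 ^ (l - 1) by rw [← pow_succ']; congr 1; omega,
    show x' + x * (1 + y' * 2 ^ (l - 1)) - (x + x' * (1 + y * 2 ^ (l - 1))) =
      (x * y' - x' * y) * 2 ^ (l - 1) by ring,
    mul_dvd_mul_iff_right h_ne]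

open DihedralGroup in
lemma not_commute_a_zpow_mul_u_zpow_mul_v (hk : 4 ∣ k) {s i : ℤ} (hi : Odd i) (x y : ℤ) :
    ¬ Commute (a l k ^ s * u l k ^ i) (a l k ^ x * u l k ^ y * v l k) := by
  intro h
  -- in `D_k` the two products are the reflections `sr (-y - i)` and `sr (i - y)`
  have h := congrArg dihedralRep h.eq
  simp only [map_mul, map_zpow, dihedralRep_a, dihedralRep_u, dihedralRep_v, one_zpow, one_mul,
    r_one_zpow, r_mul_sr, sr_mul_r, mul_assoc, sr.injEq] at h
  have h2i : ((2 * i : ℤ) : ZMod k) = 0 := by push_cast; linear_combination -h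
  rw [ZMod.intCast_zmod_eq_zero_iff_dvd] at h2i
  obtain ⟨j, rfl⟩ := hi
  have := (Int.natCast_dvd_natCast.2 hk).trans h2i
  omega

end Commutation

section ParityChar

variable (hl : 2 ≤ l) (hk : 2 ∣ k)

def parityChar (σ : ℤ) : G l k →* ℤˣ × ℤˣ :=
  G.lift (l := l) (k := k) (-1, 1) ((-1) ^ σ, 1) (1, -1)
    (by simp [(Nat.even_pow.2 ⟨even_two, by omega⟩ : Even (2 ^ l)).neg_one_pow])
    (by obtain ⟨k', rfl⟩ := hk; simp [pow_mul, Int.units_sq])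
    (by simp)
    (by simp [(odd_n₁ hl).neg_one_pow])
    (by simp [(odd_n₂ hl).neg_one_pow])
    (by simp [Int.units_inv_eq_self])

@[simp] lemma parityChar_a (σ : ℤ) : parityChar hl hk σ (a l k) = (-1, 1) := G.lift_a
@[simp] lemma parityChar_u (σ : ℤ) : parityChar hl hk σ (u l k) = ((-1) ^ σ, 1) := G.lift_u
@[simp] lemma parityChar_v (σ : ℤ) : parityChar hl hk σ (v l k) = (1, -1) := G.lift_v

lemma a_zpow_mul_u_zpow_mem_ker_parityChar_iff (σ : ℤ) {x y : ℤ} :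
    a l k ^ x * u l k ^ y ∈ (parityChar hl hk σ).ker ↔ Even (x + σ * y) := by
  simp [← Int.units_neg_one_zpow_eq_one_iff, zpow_add, zpow_mul]

lemma a_zpow_mul_u_zpow_mul_v_notMem_ker_parityChar (σ x y : ℤ) :
    a l k ^ x * u l k ^ y * v l k ∉ (parityChar hl hk σ).ker := by
  simp

lemma ker_parityChar_of_even {σ : ℤ} (hσ : Even σ) :
    (parityChar hl hk σ).ker = Subgroup.closure {a l k ^ 2, u l k} := by
  refine le_antisymm (fun g hg => ?_) ((Subgroup.closure_le _).2 ?_)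
  · obtain ⟨x, y, rfl | rfl⟩ := exists_normal_form hl g
    · rw [a_zpow_mul_u_zpow_mem_ker_parityChar_iff, Int.even_add] at hg
      refine mul_mem (zpow_mem_of_sq_mem (Subgroup.subset_closure (by simp)) ?_)
        (zpow_mem (Subgroup.subset_closure (by simp)) y)
      exact hg.2 (hσ.mul_right y)
    · exact (a_zpow_mul_u_zpow_mul_v_notMem_ker_parityChar hl hk σ x y hg).elim
  · rintro _ (rfl | rfl)
    · simp
    · simp [hσ.neg_one_zpow]

lemma ker_parityChar_of_odd {σ : ℤ} (hσ : Odd σ) :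
    (parityChar hl hk σ).ker = Subgroup.closure {a l k ^ 2, a l k * u l k} := by
  set S := Subgroup.closure {a l k ^ 2, a l k * u l k}
  have ha2 : a l k ^ 2 ∈ S := Subgroup.subset_closure (by simp)
  have hau : a l k * u l k ∈ S := Subgroup.subset_closure (by simp)
  have hu2 : u l k ^ (2 : ℤ) ∈ S := by
    have h := a_zpow_mul_u_zpow_mul (k := k) hl 1 1 1 1
    simp only [zpow_one, one_mul] at h
    rw [show u l k ^ (2 : ℤ) =
        a l k ^ (-(1 + (1 + 2 ^ (l - 1))) : ℤ) * ((a l k * u l k) * (a l k * u l k)) by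
      rw [h]; group]
    refine mul_mem (zpow_mem_of_sq_mem ha2 ?_) (mul_mem hau hau)
    simp [Int.even_add, Int.even_pow]
    omega
  refine le_antisymm (fun g hg => ?_) ((Subgroup.closure_le _).2 ?_)
  · obtain ⟨x, y, rfl | rfl⟩ := exists_normal_form hl g
    · rw [a_zpow_mul_u_zpow_mem_ker_parityChar_iff] at hg
      rcases Int.even_or_odd' y with ⟨q, rfl | rfl⟩
      · have hx : Even x := by simpa using hg.sub ((even_two_mul q).mul_left σ)
        rw [show u l k ^ (2 * q) = (u l k ^ (2 : ℤ)) ^ q by group]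
        exact mul_mem (zpow_mem_of_sq_mem ha2 hx) (zpow_mem hu2 q)
      · have hx : Odd x := by simpa using hg.sub_odd (hσ.mul (odd_two_mul_add_one q))
        rw [show a l k ^ x * u l k ^ (2 * q + 1) =
            a l k ^ (x - 1) * (a l k * u l k) * (u l k ^ (2 : ℤ)) ^ q by group]
        exact mul_mem (mul_mem (zpow_mem_of_sq_mem ha2 (hx.sub_odd odd_one)) hau)
          (zpow_mem hu2 q)
    · exact (a_zpow_mul_u_zpow_mul_v_notMem_ker_parityChar hl hk σ x y hg).elim
  · rintro _ (rfl | rfl)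
    · simp
    · simp [hσ.neg_one_zpow]

lemma isMulCommutative_ker_parityChar (σ : ℤ) : IsMulCommutative (parityChar hl hk σ).ker := by
  refine .of_setLike_mul_comm fun g hg g' hg' => ?_
  obtain ⟨x, y, rfl | rfl⟩ := exists_normal_form hl g
  · obtain ⟨x', y', rfl | rfl⟩ := exists_normal_form hl g'
    · rw [a_zpow_mul_u_zpow_mem_ker_parityChar_iff] at hg hg'
      refine (commute_a_zpow_mul_u_zpow_iff hl hk).2 ?_
      rw [show x * y' - x' * y = (x + σ * y) * y' - (x' + σ * y') * y by ring]
      exact (hg.mul_right y').sub (hg'.mul_right y)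
    · exact (a_zpow_mul_u_zpow_mul_v_notMem_ker_parityChar hl hk σ x' y' hg').elim
  · exact (a_zpow_mul_u_zpow_mul_v_notMem_ker_parityChar hl hk σ x y hg).elim

lemma index_ker_parityChar (σ : ℤ) : (parityChar hl hk σ).ker.index = 4 := by
  have hsurj : Function.Surjective (parityChar hl hk σ) := by
    rintro ⟨ε₁, ε₂⟩
    rcases Int.units_eq_one_or ε₁ with rfl | rfl <;> rcases Int.units_eq_one_or ε₂ with rfl | rfl
    exacts [⟨1, map_one _⟩, ⟨v l k, by simp⟩, ⟨a l k, by simp⟩, ⟨a l k * v l k, by simp⟩]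
  rw [Subgroup.index_ker, MonoidHom.range_eq_top.2 hsurj, Subgroup.card_top, Nat.card_prod,
    Nat.card_eq_fintype_card, Fintype.card_units_int]

end ParityChar

lemma centralizer_eq_ker_parityChar (hl : 2 ≤ l) (hk : 4 ∣ k) {s i : ℤ} (hi : Odd i) :
    Subgroup.centralizer {a l k ^ s * u l k ^ i} =
      (parityChar hl (dvd_trans ⟨2, rfl⟩ hk) s).ker := by
  ext g
  rw [Subgroup.mem_centralizer_singleton_iff]
  obtain ⟨x, y, rfl | rfl⟩ := exists_normal_form hl g
  · rw [a_zpow_mul_u_zpow_mem_ker_parityChar_iff]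
    refine (commute_a_zpow_mul_u_zpow_iff hl (dvd_trans ⟨2, rfl⟩ hk)).trans ?_
    simp [Int.even_sub, Int.even_add, Int.even_mul, Int.not_even_iff_odd.2 hi]
  · exact iff_of_false (fun h => not_commute_a_zpow_mul_u_zpow_mul_v hk hi x y h.symm)
      (a_zpow_mul_u_zpow_mul_v_notMem_ker_parityChar hl _ s x y)

end ZkDl

open ZkDl

theorem centralizer_odd (l k : ℕ) (hl : 3 ≤ l) (hk : 4 ∣ k) (s i : ℤ) (hi : Odd i) :
    (Even s → Subgroup.centralizer {a l k ^ s * u l k ^ i} =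
      Subgroup.closure {a l k ^ 2, u l k}) ∧
    (Odd s → Subgroup.centralizer {a l k ^ s * u l k ^ i} =
      Subgroup.closure {a l k ^ 2, a l k * u l k}) ∧
    IsMulCommutative (Subgroup.centralizer {a l k ^ s * u l k ^ i}) ∧
    (Subgroup.centralizer {a l k ^ s * u l k ^ i}).Normal ∧
    (Subgroup.centralizer {a l k ^ s * u l k ^ i}).index = 4 := by
  have hl' : 2 ≤ l := by omega
  have hk' : 2 ∣ k := dvd_trans ⟨2, rfl⟩ hk
  rw [centralizer_eq_ker_parityChar hl' hk hi]
  exact ⟨ker_parityChar_of_even hl' hk', ker_parityChar_of_odd hl' hk',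
    isMulCommutative_ker_parityChar hl' hk' s, MonoidHom.normal_ker _,
    index_ker_parityChar hl' hk' s⟩
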